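/- arXiv:math/0412339 — 3 statements merged into one kernel-verified Lean document; each statement's English description precedes it below -/
import Mathlib

section
/- Let $A_1,\dots,A_s$ be nonnegative integers and let $k_1,\dots,k_s$ be positive integers with $1 \le k_i \le A_1+\cdots+A_s$ for all $i$. Then either there exists an index $i$ with $1\le k_i \le A_i$, or there exist indices $i < j$ with $-A_j \le k_i - k_j \le A_i - 1$. -/
/-!
Suppose both alternatives fail. Then for every pair `i < j` either `A i ≤ k i - k j` or
`A j ≤ k j - k i`, i.e. the relation `A i ≤ k i - k j` is a tournament on the indices, so it has a
Hamiltonian path `i₁ → ⋯ → i_s`. Telescoping along the path gives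
`∑ A ≤ k i₁ - k i_s + A i_s`, while `k i_s ≥ 1` forces `k i_s > A i_s`; hence `k i₁ > ∑ A`.
-/

namespace List

variable {α : Type*} (r : α → α → Prop) [DecidableRel r]

theorem isChain_cons_orderedInsert {a b : α} {l : List α} (hbl : IsChain r (b :: l))
    (hba : r b a) (htot : ∀ c ∈ l, r a c ∨ r c a) : IsChain r (b :: l.orderedInsert r a) := by
  induction l generalizing b with
  | nil => exact isChain_pair.mpr hba
  | cons c l ih =>
    obtain ⟨hbc, hcl⟩ := isChain_cons_cons.mp hbl
    rw [orderedInsert_cons]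
    split_ifs with hac
    · exact isChain_cons_cons.mpr ⟨hba, isChain_cons_cons.mpr ⟨hac, hcl⟩⟩
    · have hca : r c a := (htot c mem_cons_self).resolve_left hac
      exact isChain_cons_cons.mpr
        ⟨hbc, ih hcl hca fun d hd => htot d (mem_cons_of_mem c hd)⟩

theorem IsChain.orderedInsert {a : α} {l : List α} (hl : IsChain r l)
    (htot : ∀ b ∈ l, r a b ∨ r b a) : IsChain r (l.orderedInsert r a) := by
  cases l with
  | nil => exact isChain_singleton a
  | cons b l =>
    rw [orderedInsert_cons]
    split_ifs with hab
    · exact isChain_cons_cons.mpr ⟨hab, hl⟩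
    · exact isChain_cons_orderedInsert r hl ((htot b mem_cons_self).resolve_left hab)
        fun c hc => htot c (mem_cons_of_mem b hc)

/-- Insertion sort along a tournament (a relation relating every pair of entries in at least one
direction, not necessarily transitively) yields a Hamiltonian path. -/
theorem isChain_insertionSort_of_pairwise {l : List α}
    (htot : l.Pairwise fun a b => r a b ∨ r b a) : IsChain r (l.insertionSort r) := by
  induction l with
  | nil => exact IsChain.nil
  | cons a l ih =>
    obtain ⟨ha, hl⟩ := pairwise_cons.mp htot
    exact (ih hl).orderedInsert r fun b hb => ha b ((perm_insertionSort r l).mem_iff.mp hb)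

end List

theorem exists_sum_map_add_le_of_isChain {α : Type*} (A k : α → ℤ) (a : α) (l : List α)
    (hchain : (a :: l).IsChain fun i j => A i ≤ k i - k j) :
    ∃ m, ((a :: l).map A).sum + k m ≤ k a + A m := by
  induction l generalizing a with
  | nil => exact ⟨a, by simp [add_comm]⟩
  | cons b l ih =>
    obtain ⟨hab, hbl⟩ := List.isChain_cons_cons.mp hchain
    obtain ⟨m, hm⟩ := ih b hbl
    refine ⟨m, ?_⟩
    simp only [List.map_cons, List.sum_cons] at hm ⊢
    linarith

theorem stmt5_general (s : ℕ) (hs : 1 ≤ s) (A : Fin s → ℤ)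
    (k : Fin s → ℤ) (hk : ∀ i, 1 ≤ k i ∧ k i ≤ ∑ j, A j) :
    (∃ i, 1 ≤ k i ∧ k i ≤ A i) ∨
      ∃ i j, i < j ∧ -A j ≤ k i - k j ∧ k i - k j ≤ A i - 1 := by
  by_contra! ⟨hlarge, hpair⟩
  let r : Fin s → Fin s → Prop := fun i j => A i ≤ k i - k j
  have htour : (List.finRange s).Pairwise fun i j => r i j ∨ r j i :=
    (List.pairwise_lt_finRange s).imp fun {i j} hij => by
      have := hpair i j hij
      by_contra!
      simp only [r] at this
      omega
  have hperm := List.perm_insertionSort r (List.finRange s)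
  obtain ⟨a, L, hl⟩ : ∃ a L, (List.finRange s).insertionSort r = a :: L :=
    List.exists_cons_of_length_pos (by rw [hperm.length_eq, List.length_finRange]; omega)
  rw [hl] at hperm
  obtain ⟨m, hm⟩ := exists_sum_map_add_le_of_isChain A k a L
    (hl ▸ List.isChain_insertionSort_of_pairwise r htour)
  have hsum : ((a :: L).map A).sum = ∑ j, A j := by
    rw [Fin.sum_univ_def]
    exact (hperm.map A).sum_eq
  linarith [hlarge m (hk m).1, (hk a).2]

/-- The tournament lemma (Lemma 3.4 of Gessel–Xin): if `1 ≤ k i ≤ A 1 + ⋯ + A s` for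
all `i`, then either `1 ≤ k i ≤ A i` for some `i`, or `-A j ≤ k i - k j ≤ A i - 1`
for some `i < j`. -/
theorem stmt5 (s : ℕ) (hs : 1 ≤ s) (A : Fin s → ℤ) (hA : ∀ i, 0 ≤ A i)
    (k : Fin s → ℤ) (hk : ∀ i, 1 ≤ k i ∧ k i ≤ ∑ j, A j) :
    (∃ i, 1 ≤ k i ∧ k i ≤ A i) ∨
      ∃ i j, i < j ∧ -A j ≤ k i - k j ∧ k i - k j ≤ A i - 1 :=
  stmt5_general s hs A k hk
end

section
/- Suppose positive integers $k_1,\dots,k_s$ and nonnegative integers $A_1,\dots,A_s$ satisfy: for all $i$, $k_i > A_i$, and for all $i<j$, either $k_i - k_j \ge A_i$ or $k_i - k_j \le -A_j - 1$. Then some $k_i$ exceeds $A_1 + \cdots + A_s$. -/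
/-!
Choose `m` with `k m` maximal, and among the maximizers the one of smallest index. The pair
condition then forces `k j + A m ≤ k m` for every other `j`, so removing `m` and applying
induction to the remaining indices gives some `i` with `∑_{j ≠ m} A j < k i ≤ k m - A m`.
-/

open Finset

section

variable {ι : Type*} [LinearOrder ι] {A k : ι → ℤ}

lemma Finset.exists_max_image_least_index (k : ι → ℤ) {T : Finset ι} (hT : T.Nonempty) :
    ∃ m ∈ T, ∀ j ∈ T, k j ≤ k m ∧ (j < m → k j < k m) := by
  obtain ⟨m, hm, hmax⟩ := T.exists_max_image (fun i ↦ toLex (k i, OrderDual.toDual i)) hT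
  refine ⟨m, hm, fun j hj ↦ ?_⟩
  rcases Prod.Lex.toLex_le_toLex.mp (hmax j hj) with hlt | ⟨heq, hle⟩
  · exact ⟨hlt.le, fun _ ↦ hlt⟩
  · exact ⟨heq.le, fun hjm ↦ absurd (OrderDual.toDual_le_toDual.mp hle) hjm.not_ge⟩

lemma exists_add_le_of_gap_condition (hA : ∀ i, 0 ≤ A i)
    (h2 : ∀ i j, i < j → A i ≤ k i - k j ∨ k i - k j ≤ -A j - 1)
    {T : Finset ι} (hT : T.Nonempty) :
    ∃ m ∈ T, ∀ j ∈ T, j ≠ m → k j + A m ≤ k m := by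
  obtain ⟨m, hm, hmax⟩ := T.exists_max_image_least_index k hT
  refine ⟨m, hm, fun j hj hjm ↦ ?_⟩
  obtain ⟨hle, hlt⟩ := hmax j hj
  rcases hjm.lt_or_gt with hjm | hmj
  · have := hlt hjm
    rcases h2 j m hjm with h | h <;> linarith [hA j]
  · rcases h2 m j hmj with h | h <;> linarith [hA j]

lemma exists_sum_lt_of_gap_condition (hA : ∀ i, 0 ≤ A i) (h1 : ∀ i, A i < k i)
    (h2 : ∀ i j, i < j → A i ≤ k i - k j ∨ k i - k j ≤ -A j - 1)
    {T : Finset ι} (hT : T.Nonempty) : ∃ i ∈ T, ∑ j ∈ T, A j < k i := by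
  induction hT using Finset.Nonempty.strong_induction with
  | h₀ a => exact ⟨a, mem_singleton_self a, by simpa using h1 a⟩
  | @h₁ T hT ih =>
    obtain ⟨m, hm, hgap⟩ := exists_add_le_of_gap_condition hA h2 hT.nonempty
    obtain ⟨i, hi, hsum⟩ := ih (T.erase m) hT.erase_nonempty (erase_ssubset hm)
    refine ⟨m, hm, ?_⟩
    calc ∑ j ∈ T, A j = ∑ j ∈ T.erase m, A j + A m := (sum_erase_add T A hm).symm
      _ < k i + A m := by gcongr
      _ ≤ k m := hgap i (mem_of_mem_erase hi) (ne_of_mem_erase hi)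

end

theorem stmt6_general (s : ℕ) (hs : 1 ≤ s) (A : Fin s → ℤ) (hA : ∀ i, 0 ≤ A i)
    (k : Fin s → ℤ) (h1 : ∀ i, A i < k i)
    (h2 : ∀ i j : Fin s, i < j → A i ≤ k i - k j ∨ k i - k j ≤ -A j - 1) :
    ∃ i, (∑ j, A j) < k i := by
  obtain ⟨i, -, hi⟩ :=
    exists_sum_lt_of_gap_condition hA h1 h2 (univ_nonempty_iff.mpr ⟨⟨0, hs⟩⟩)
  exact ⟨i, hi⟩

/-- Contrapositive form of the tournament lemma: if `k i > A i` for all `i` and for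
all `i < j` either `k i - k j ≥ A i` or `k i - k j ≤ -A j - 1`, then some `k i`
exceeds `A 1 + ⋯ + A s`. -/
theorem stmt6 (s : ℕ) (hs : 1 ≤ s) (A : Fin s → ℤ) (hA : ∀ i, 0 ≤ A i)
    (k : Fin s → ℤ) (hk : ∀ i, 0 < k i) (h1 : ∀ i, A i < k i)
    (h2 : ∀ i j : Fin s, i < j → A i ≤ k i - k j ∨ k i - k j ≤ -A j - 1) :
    ∃ i, (∑ j, A j) < k i :=
  stmt6_general s hs A hA k h1 h2
end

section
/- With notation as in the Gessel–Xin proof, let $r_0 = k_0 = 0$, let $0 < r_1 < \cdots < r_s \le n$ and $1 \le k_i \le b$ for $1\le i\le s$, and define $\mathcal{Q}(b\mid \mathbf{r};\mathbf{k}) = E_{\mathbf{r},\mathbf{k}}\big[\mathcal{Q}(b)\prod_{i=1}^s (1 - x_0/(x_{r_i} q^{k_i}))\big]$, where $E_{\mathbf{r},\mathbf{k}}$ replaces $x_{r_i}$ by $x_{r_s} q^{k_s - k_i}$ for $i = 0,1,\dots,s-1$. If $1 \le k_i \le a_{r_1} + \cdots + a_{r_s}$ for all $1\le i\le s$, then $\mathcal{Q}(b\mid\mathbf{r};\mathbf{k})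 = 0$. -/
open Finset
open scoped Classical

noncomputable section

/-- The field `ℚ(q)(x_0, x_1, x_2, …)` of rational functions. -/
abbrev FF : Type := FractionRing (MvPolynomial ℕ (RatFunc ℚ))

/-- The variable `x_j` as a rational function. -/
def XX (j : ℕ) : FF := algebraMap (MvPolynomial ℕ (RatFunc ℚ)) FF (MvPolynomial.X j)

/-- The parameter `q` as a rational function. -/
def qq : FF := algebraMap (MvPolynomial ℕ (RatFunc ℚ)) FF (MvPolynomial.C RatFunc.X)

/-- The substitution `E_{𝐫,𝐤}`, which replaces `x_{r i}` by `x_{r s} q^(k s - k i)`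
for `i = 0, 1, …, s-1` (and leaves the other variables unchanged). -/
def Esub (s : ℕ) (r k : ℕ → ℕ) : ℕ → FF := fun j =>
  if h : ∃ i, i < s ∧ r i = j then
    XX (r s) * qq ^ ((k s : ℤ) - (k h.choose : ℤ))
  else XX j

/-- `𝒬(b ∣ 𝐫; 𝐤) = E_{𝐫,𝐤}[𝒬(b) ∏_{i=1}^s (1 - x_0/(x_{r i} q^{k i}))]`, where
`𝒬(b) = ∏_{j=1}^n (q x_j/x_0)_{a_j} / ∏_{c=1}^b (1 - x_0/(x_j q^c))
  ⬝ ∏_{1 ≤ i < j ≤ n} (x_i/x_j)_{a_i} (q x_j/x_i)_{a_j}`: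
the factors `∏_{i=1}^s (1 - x_0/(x_{r i} q^{k i}))` cancel exactly the factors of
the denominator of `𝒬(b)` that are taken to zero by `E_{𝐫,𝐤}`, and `E_{𝐫,𝐤}` is
applied to the resulting rational function. -/
def Qrk (n s b : ℕ) (a r k : ℕ → ℕ) : FF :=
  (∏ j ∈ Icc 1 n,
    ((∏ c ∈ range (a j), (1 - qq ^ (c+1) * Esub s r k j / Esub s r k 0)) /
     ∏ c ∈ (Icc 1 b).filter (fun c => ¬ ∃ i ∈ Icc 1 s, r i = j ∧ k i = c),
       (1 - Esub s r k 0 / (Esub s r k j * qq ^ c)))) *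
  ∏ j ∈ Icc 1 n, ∏ i ∈ Ioo 0 j,
    ((∏ c ∈ range (a i), (1 - qq ^ c * Esub s r k i / Esub s r k j)) *
     ∏ c ∈ range (a j), (1 - qq ^ (c+1) * Esub s r k j / Esub s r k i))

/-!
Under `E_{𝐫,𝐤}` every `x_{r i}` becomes `x_{r s} q^{k s - k i}`, so each factor of `𝒬(b ∣ 𝐫; 𝐤)`
built from them is `1 - q^e` for an explicit exponent `e`. If `𝒬(b ∣ 𝐫; 𝐤) ≠ 0`, the factors
`(q x_{r i}/x_0)_{a_{r i}}` force `a_{r i} < k i`, and the factors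
`(x_{r i}/x_{r j})_{a_{r i}} (q x_{r j}/x_{r i})_{a_{r j}}` force the blocks
`[k i - a_{r i}, k i)` to be pairwise disjoint. These blocks all lie in `[1, max k)`, so
`a_{r 1} + ⋯ + a_{r s} < max k`, contradicting the hypothesis on the `k i`.
-/

theorem Finset.sum_lt_of_pairwiseDisjoint_Ico {ι : Type*} {S : Finset ι} {A k : ι → ℕ} {M : ℕ}
    (hS : S.Nonempty) (hA : ∀ i ∈ S, A i < k i) (hM : ∀ i ∈ S, k i ≤ M)
    (hdisj : (S : Set ι).PairwiseDisjoint fun i => Ico (k i - A i) (k i)) :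
    ∑ i ∈ S, A i < M := by
  have hsub : S.biUnion (fun i => Ico (k i - A i) (k i)) ⊆ Ico 1 M := by
    intro x hx
    obtain ⟨i, hi, hx⟩ := mem_biUnion.1 hx
    have := hA i hi; have := hM i hi
    rw [mem_Ico] at hx ⊢
    omega
  have hlen : ∀ i ∈ S, #(Ico (k i - A i) (k i)) = A i := fun i hi => by
    rw [Nat.card_Ico]; have := hA i hi; omega
  obtain ⟨i, hi⟩ := hS
  calc ∑ i ∈ S, A i = #(S.biUnion fun i => Ico (k i - A i) (k i)) := by
        rw [card_biUnion hdisj, sum_congr rfl hlen]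
    _ ≤ #(Ico 1 M) := card_le_card hsub
    _ < M := by rw [Nat.card_Ico]; have := hA i hi; have := hM i hi; omega

lemma apply_mem_Icc_of_strictMonoOn {r : ℕ → ℕ} {s n i : ℕ} (hr : StrictMonoOn r (Set.Iic s))
    (hr0 : r 0 = 0) (hrn : r s ≤ n) (hi : i ∈ Icc 1 s) : r i ∈ Icc 1 n := by
  rw [mem_Icc] at hi ⊢
  have h0 := hr.monotoneOn (Set.mem_Iic.2 (Nat.zero_le s)) (Set.mem_Iic.2 hi.2) (Nat.zero_le i)
  have hpos := hr (Set.mem_Iic.2 (Nat.zero_le s)) (Set.mem_Iic.2 hi.2) hi.1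
  have hs := hr.monotoneOn (Set.mem_Iic.2 hi.2) (Set.mem_Iic.2 le_rfl) hi.2
  omega

lemma XX_ne_zero (j : ℕ) : XX j ≠ 0 :=
  fun h => MvPolynomial.X_ne_zero j (IsFractionRing.to_map_eq_zero_iff.1 h)

lemma qq_ne_zero : qq ≠ 0 :=
  fun h => RatFunc.X_ne_zero (MvPolynomial.C_eq_zero.1 (IsFractionRing.to_map_eq_zero_iff.1 h))

section Qrk

variable {n s b : ℕ} {a r k : ℕ → ℕ}

lemma Qrk_eq_zero_of_numerator {j c : ℕ} (hj : j ∈ Icc 1 n) (hc : c < a j)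
    (h : qq ^ (c + 1) * Esub s r k j / Esub s r k 0 = 1) : Qrk n s b a r k = 0 := by
  unfold Qrk
  refine mul_eq_zero_of_left (prod_eq_zero hj ?_) _
  rw [prod_eq_zero (mem_range.2 hc) (by rw [h, sub_self]), zero_div]

lemma Qrk_eq_zero_of_pair_left {i j c : ℕ} (hj : j ∈ Icc 1 n) (hi : i ∈ Ioo 0 j) (hc : c < a i)
    (h : qq ^ c * Esub s r k i / Esub s r k j = 1) : Qrk n s b a r k = 0 := by
  unfold Qrk
  refine mul_eq_zero_of_right _ (prod_eq_zero hj (prod_eq_zero hi ?_))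
  exact mul_eq_zero_of_left (prod_eq_zero (mem_range.2 hc) (by rw [h, sub_self])) _

lemma Qrk_eq_zero_of_pair_right {i j c : ℕ} (hj : j ∈ Icc 1 n) (hi : i ∈ Ioo 0 j) (hc : c < a j)
    (h : qq ^ (c + 1) * Esub s r k j / Esub s r k i = 1) : Qrk n s b a r k = 0 := by
  unfold Qrk
  refine mul_eq_zero_of_right _ (prod_eq_zero hj (prod_eq_zero hi ?_))
  exact mul_eq_zero_of_right _ (prod_eq_zero (mem_range.2 hc) (by rw [h, sub_self]))

variable (hr : StrictMonoOn r (Set.Iic s))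
include hr

lemma Esub_apply {i : ℕ} (hi : i ≤ s) :
    Esub s r k (r i) = XX (r s) * qq ^ ((k s : ℤ) - k i) := by
  have hinj {i' : ℕ} (hi' : i' < s) (h : r i' = r i) : i' = i :=
    hr.injOn (Set.mem_Iic.2 hi'.le) (Set.mem_Iic.2 hi) h
  unfold Esub
  split_ifs with h
  · rw [hinj h.choose_spec.1 h.choose_spec.2]
  · obtain rfl : i = s := by
      by_contra hne
      exact h ⟨i, lt_of_le_of_ne hi hne, rfl⟩
    rw [sub_self, zpow_zero, mul_one]

lemma qq_pow_mul_Esub_div_Esub {i j m : ℕ} (hi : i ≤ s) (hj : j ≤ s) (h : m + k j = k i) :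
    qq ^ m * Esub s r k (r i) / Esub s r k (r j) = 1 := by
  rw [Esub_apply hr hi, Esub_apply hr hj,
    div_eq_one_iff_eq (mul_ne_zero (XX_ne_zero _) (zpow_ne_zero _ qq_ne_zero)),
    ← zpow_natCast, mul_left_comm, ← zpow_add₀ qq_ne_zero]
  congr 2
  omega

lemma Qrk_eq_zero_of_le {i : ℕ} (hr0 : r 0 = 0) (hk0 : k 0 = 0) (hrn : r s ≤ n)
    (hi : i ∈ Icc 1 s) (hki : 0 < k i) (hka : k i ≤ a (r i)) : Qrk n s b a r k = 0 := by
  refine Qrk_eq_zero_of_numerator (apply_mem_Icc_of_strictMonoOn hr hr0 hrn hi)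
    (c := k i - 1) (by omega) ?_
  rw [← hr0]
  exact qq_pow_mul_Esub_div_Esub hr (mem_Icc.1 hi).2 (Nat.zero_le s) (by omega)

/-- The asymmetry of `hlt` and `hle` comes from the extra `q` in `(q x_j / x_i)_{a_j}`. -/
lemma Qrk_eq_zero_of_overlap {i j : ℕ} (hr0 : r 0 = 0) (hrn : r s ≤ n)
    (hi : 1 ≤ i) (hij : i < j) (hj : j ≤ s)
    (hlt : k i < k j + a (r i)) (hle : k j ≤ k i + a (r j)) : Qrk n s b a r k = 0 := by
  have hrj := apply_mem_Icc_of_strictMonoOn hr hr0 hrn (mem_Icc.2 ⟨hi.trans hij.le, hj⟩)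
  have hri : r i ∈ Ioo 0 (r j) := by
    have := apply_mem_Icc_of_strictMonoOn hr hr0 hrn (mem_Icc.2 ⟨hi, hij.le.trans hj⟩)
    exact mem_Ioo.2 ⟨(mem_Icc.1 this).1, hr (Set.mem_Iic.2 (hij.le.trans hj)) hj hij⟩
  rcases le_or_gt (k j) (k i) with hkji | hkij
  · exact Qrk_eq_zero_of_pair_left hrj hri (c := k i - k j) (by omega)
      (qq_pow_mul_Esub_div_Esub hr (hij.le.trans hj) hj (by omega))
  · exact Qrk_eq_zero_of_pair_right hrj hri (c := k j - k i - 1) (by omega)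
      (qq_pow_mul_Esub_div_Esub hr hj (hij.le.trans hj) (by omega))

end Qrk

theorem stmt16_general (n s b : ℕ) (a r k : ℕ → ℕ) (hs : 1 ≤ s)
    (hr0 : r 0 = 0) (hk0 : k 0 = 0)
    (hrmono : ∀ i, i < s → r i < r (i+1)) (hrn : r s ≤ n)
    (hk : ∀ i ∈ Icc 1 s, 1 ≤ k i ∧ k i ≤ b)
    (hmain : ∀ i ∈ Icc 1 s, k i ≤ ∑ i' ∈ Icc 1 s, a (r i')) :
    Qrk n s b a r k = 0 := by
  have hr : StrictMonoOn r (Set.Iic s) := strictMonoOn_Iic_of_lt_succ hrmono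
  by_contra hQ
  have hA : ∀ i ∈ Icc 1 s, a (r i) < k i := fun i hi => by
    by_contra! hka
    exact hQ (Qrk_eq_zero_of_le hr hr0 hk0 hrn hi (hk i hi).1 hka)
  have hdisj : (Icc 1 s : Set ℕ).PairwiseDisjoint fun i => Ico (k i - a (r i)) (k i) := by
    have hsep {i j : ℕ} (hi : i ∈ Icc 1 s) (hj : j ∈ Icc 1 s) (hij : i < j) :
        Disjoint (Ico (k i - a (r i)) (k i)) (Ico (k j - a (r j)) (k j)) := by
      have := hA i hi; have := hA j hj
      by_cases hlt : k i < k j + a (r i) ∧ k j ≤ k i + a (r j)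
      · exact (hQ (Qrk_eq_zero_of_overlap hr hr0 hrn (mem_Icc.1 hi).1 hij (mem_Icc.1 hj).2
          hlt.1 hlt.2)).elim
      · rw [disjoint_left]; simp only [mem_Ico]; omega
    intro i hi j hj hne
    rcases hne.lt_or_gt with hij | hji
    · exact hsep hi hj hij
    · exact (hsep hj hi hji).symm
  obtain ⟨m, hm, hmax⟩ := (Icc 1 s).exists_max_image k (nonempty_Icc.2 hs)
  exact (hmain m hm).not_gt (sum_lt_of_pairwiseDisjoint_Ico (nonempty_Icc.2 hs) hA hmax hdisj)

/-- Vanishing property (i) of Lemma 4.1 of Gessel–Xin: with `r 0 = k 0 = 0`,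
`0 < r 1 < ⋯ < r s ≤ n` and `1 ≤ k i ≤ b`, if moreover
`1 ≤ k i ≤ a_{r 1} + ⋯ + a_{r s}` for all `1 ≤ i ≤ s`, then
`𝒬(b ∣ 𝐫; 𝐤) = 0`. -/
theorem stmt16 (n s b : ℕ) (a r k : ℕ → ℕ) (hs : 1 ≤ s) (hb : 0 < b)
    (hr0 : r 0 = 0) (hk0 : k 0 = 0)
    (hrmono : ∀ i, i < s → r i < r (i+1)) (hrn : r s ≤ n)
    (hk : ∀ i ∈ Icc 1 s, 1 ≤ k i ∧ k i ≤ b)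
    (hmain : ∀ i ∈ Icc 1 s, k i ≤ ∑ i' ∈ Icc 1 s, a (r i')) :
    Qrk n s b a r k = 0 :=
  stmt16_general n s b a r k hs hr0 hk0 hrmono hrn hk hmain

end
end
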